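/- arXiv:2308.11517 — 2 statements merged into one kernel-verified Lean document; each statement's English description precedes it below -/
import Mathlib

section
/- For any simple graph G, the path cover number P(G) is at most the zero forcing number Z(G). -/
open SimpleGraph

section ZF
variable {V : Type*}

/-- One round of the zero forcing color change rule applied to the blue set `S`. -/
def forceStep (G : SimpleGraph V) (S : Set V) : Set V :=
  S ∪ {w | ∃ u ∈ S, G.Adj u w ∧ ∀ x, G.Adj u x → x ∉ S → x = w}

/-- `S` is a zero forcing set: repeatedly applying the color change rule turns all
vertices blue; equivalently every forcing-closed superset of `S` is everything. -/
def IsZeroForcingSet (G : SimpleGraph V) (S : Set V) : Prop :=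
  ∀ T : Set V, S ⊆ T → forceStep G T ⊆ T → T = Set.univ

/-- The zero forcing number `Z(G)`. -/
noncomputable def zeroForcingNumber (G : SimpleGraph V) [Fintype V] : ℕ :=
  sInf {n | ∃ S : Finset V, S.card = n ∧ IsZeroForcingSet G ↑S}

/-- The list `l` enumerates an induced path of `G` (a single vertex counts). -/
def IsListPath (G : SimpleGraph V) (l : List V) : Prop :=
  l.Nodup ∧ ∀ i j : Fin l.length,
    (G.Adj (l.get i) (l.get j) ↔ (i.val + 1 = j.val ∨ j.val + 1 = i.val))

/-- The set `P` induces a path in `G`. -/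
def IsInducedPathSet (G : SimpleGraph V) (P : Set V) : Prop :=
  ∃ l : List V, IsListPath G l ∧ {v | v ∈ l} = P

/-- The path cover number `P(G)`: the minimum number of parts in a partition of the
vertex set into sets each inducing a path. -/
noncomputable def pathCoverNumber (G : SimpleGraph V) [Fintype V] [DecidableEq V] : ℕ :=
  sInf {n | ∃ P : Finpartition (Finset.univ : Finset V),
    P.parts.card = n ∧ ∀ p ∈ P.parts, IsInducedPathSet G ↑p}

/-- `G` is 2-connected: at least 3 vertices, connected, and deleting any vertex
leaves a connected graph. -/
def IsTwoConnected (G : SimpleGraph V) [Fintype V] : Prop :=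
  3 ≤ Fintype.card V ∧ G.Connected ∧ ∀ v : V, (G.induce {w : V | w ≠ v}).Connected

/-- `σ` places the vertices of `G` on a circle (in the order given by `Fin`) so that no
two edges, drawn as chords, cross; this witnesses outerplanarity of `G`. -/
def IsOuterplanarEmbedding (G : SimpleGraph V) [Fintype V]
    (σ : V ≃ Fin (Fintype.card V)) : Prop :=
  ∀ a b c d : V, G.Adj a b → G.Adj c d →
    ¬(σ a < σ c ∧ σ c < σ b ∧ σ b < σ d)

/-- A graph is outerplanar iff its vertices can be placed on a circle with all
edges drawn as pairwise non-crossing chords. -/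
def IsOuterplanar (G : SimpleGraph V) [Fintype V] : Prop :=
  ∃ σ : V ≃ Fin (Fintype.card V), IsOuterplanarEmbedding G σ

/-- `v` is the cyclic successor of `u` among the elements of `F`, with respect to the
circular order induced by `σ`. -/
def nextIn {n : ℕ} (σ : V ≃ Fin n) (F : Finset V) (u v : V) : Prop :=
  u ∈ F ∧ v ∈ F ∧ u ≠ v ∧
    ((σ u < σ v ∧ ∀ w ∈ F, σ u < σ w → σ v ≤ σ w) ∨
     ((∀ w ∈ F, σ w ≤ σ u) ∧ (∀ w ∈ F, σ v ≤ σ w)))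

/-- `F` is (the vertex set of) a bounded face of the outerplanar embedding `σ` of the
2-connected outerplanar graph `G`: in the circular order, consecutive members of `F`
are exactly the adjacent pairs inside `F` (so `F` spans a chordless polygon). -/
def IsFace (G : SimpleGraph V) [Fintype V] (σ : V ≃ Fin (Fintype.card V))
    (F : Finset V) : Prop :=
  3 ≤ F.card ∧ ∀ u ∈ F, ∀ v ∈ F,
    (G.Adj u v ↔ (nextIn σ F u v ∨ nextIn σ F v u))

/-- The weak dual of the embedded outerplanar graph `G`: vertices are the bounded
faces, two faces being adjacent iff they share an edge of `G`. -/
def weakDual (G : SimpleGraph V) [Fintype V] (σ : V ≃ Fin (Fintype.card V)) :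
    SimpleGraph {F : Finset V // IsFace G σ F} where
  Adj F₁ F₂ := F₁ ≠ F₂ ∧ ∃ u v, G.Adj u v ∧ u ∈ F₁.1 ∧ u ∈ F₂.1 ∧ v ∈ F₁.1 ∧ v ∈ F₂.1
  symm := by
    constructor
    rintro F₁ F₂ ⟨hne, u, v, ha, h1, h2, h3, h4⟩
    exact ⟨hne.symm, u, v, ha, h2, h1, h4, h3⟩
  loopless := by constructor; rintro F ⟨hne, -⟩; exact hne rfl

/-- The degree of a face in the weak dual. -/
noncomputable def dualDeg (G : SimpleGraph V) [Fintype V]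
    (σ : V ≃ Fin (Fintype.card V)) (F : {F : Finset V // IsFace G σ F}) : ℕ :=
  ((weakDual G σ).neighborSet F).ncard

/-- A leaf face: a face which is a leaf of the weak dual tree. -/
def IsLeafFace (G : SimpleGraph V) [Fintype V] (σ : V ≃ Fin (Fintype.card V))
    (F : {F : Finset V // IsFace G σ F}) : Prop :=
  dualDeg G σ F = 1

/-- `n_ℓ`: the number of leaves of the weak dual. -/
noncomputable def numDualLeaves (G : SimpleGraph V) [Fintype V]
    (σ : V ≃ Fin (Fintype.card V)) : ℕ :=
  Nat.card {F : {F : Finset V // IsFace G σ F} // IsLeafFace G σ F}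

end ZF

section FT
variable {V : Type*} [Fintype V]

/-- Branch faces: faces of weak-dual degree 2 that are adjacent to a leaf face or to
another branch face. -/
inductive IsBranchFace (G : SimpleGraph V) (σ : V ≃ Fin (Fintype.card V)) :
    {F : Finset V // IsFace G σ F} → Prop
  | leaf (F F' : {F : Finset V // IsFace G σ F}) :
      dualDeg G σ F = 2 → (weakDual G σ).Adj F F' → IsLeafFace G σ F' →
      IsBranchFace G σ F
  | branch (F F' : {F : Finset V // IsFace G σ F}) :
      dualDeg G σ F = 2 → (weakDual G σ).Adj F F' → IsBranchFace G σ F' →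
      IsBranchFace G σ F

/-- Limb faces: faces of weak-dual degree at least 3 adjacent to a leaf or branch face. -/
def IsLimbFace (G : SimpleGraph V) (σ : V ≃ Fin (Fintype.card V))
    (F : {F : Finset V // IsFace G σ F}) : Prop :=
  3 ≤ dualDeg G σ F ∧
    ∃ F', (weakDual G σ).Adj F F' ∧ (IsLeafFace G σ F' ∨ IsBranchFace G σ F')

/-- Trunk faces: faces of weak-dual degree at least 2 that are adjacent to no leaf
face and no branch face. -/
def IsTrunkFace (G : SimpleGraph V) (σ : V ≃ Fin (Fintype.card V))
    (F : {F : Finset V // IsFace G σ F}) : Prop :=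
  2 ≤ dualDeg G σ F ∧
    ∀ F', (weakDual G σ).Adj F F' → ¬(IsLeafFace G σ F' ∨ IsBranchFace G σ F')

/-- The vertices of the foliage of `G`: vertices lying on a leaf, branch, or limb face. -/
def foliageSet (G : SimpleGraph V) (σ : V ≃ Fin (Fintype.card V)) : Set V :=
  {v | ∃ F : {F : Finset V // IsFace G σ F},
    (IsLeafFace G σ F ∨ IsBranchFace G σ F ∨ IsLimbFace G σ F) ∧ v ∈ F.1}

/-- The vertices of the trunk of `G`: vertices lying on a trunk face. -/
def trunkSet (G : SimpleGraph V) (σ : V ≃ Fin (Fintype.card V)) : Set V :=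
  {v | ∃ F : {F : Finset V // IsFace G σ F}, IsTrunkFace G σ F ∧ v ∈ F.1}

/-- Boundary vertices: vertices in both the foliage and the trunk. -/
def boundarySet (G : SimpleGraph V) (σ : V ≃ Fin (Fintype.card V)) : Set V :=
  foliageSet G σ ∩ trunkSet G σ

end FT

/-!
Run the forcing process from a minimum zero forcing set `S`, recording for each `s ∈ S` the
chain of vertices forced one after another starting from `s`. These chains partition the vertex
set into `|S| = Z(G)` parts, and each is an induced path: when a vertex forces, all its other
neighbours are already blue, so no vertex forced later is adjacent to it.
-/

section ForcingChains
variable {V : Type*} {G : SimpleGraph V}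

theorem isZeroForcingSet_univ : IsZeroForcingSet G Set.univ :=
  fun _ hT _ => Set.univ_subset_iff.1 hT

theorem IsZeroForcingSet.exists_force {S T : Set V} (hS : IsZeroForcingSet G S) (hST : S ⊆ T)
    (hT : T ≠ Set.univ) :
    ∃ u ∈ T, ∃ w ∉ T, G.Adj u w ∧ ∀ x, G.Adj u x → x ∉ T → x = w := by
  by_contra h
  refine hT (hS T hST ?_)
  rintro w (hw | ⟨u, hu, huw, hforce⟩)
  · exact hw
  · by_contra hw
    exact h ⟨u, hu, w, hw, huw, hforce⟩

theorem isListPath_singleton (v : V) : IsListPath G [v] :=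
  ⟨List.nodup_singleton v, fun i j => by fin_cases i; fin_cases j; simp⟩

theorem IsListPath.cons {a w : V} {l : List V} (hl : IsListPath G (a :: l)) (hw : w ∉ a :: l)
    (hwa : G.Adj w a) (hwl : ∀ v ∈ l, ¬ G.Adj w v) : IsListPath G (w :: a :: l) := by
  have hw_adj : ∀ j : Fin (a :: l).length, G.Adj w (a :: l)[(j : ℕ)] ↔ j = 0 := by
    intro j
    cases j using Fin.cases with
    | zero => simpa using hwa
    | succ j => simpa using hwl _ (List.get_mem l j)
  refine ⟨List.nodup_cons.2 ⟨hw, hl.1⟩, fun i j => ?_⟩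
  cases i using Fin.cases <;> cases j using Fin.cases
  · simp
  · simp [hw_adj]
  · simp [G.adj_comm _ w, hw_adj]
  · simpa using hl.2 _ _

variable [DecidableEq V]

def chainBlue (S : Finset V) (c : V → List V) : Finset V :=
  S.biUnion fun s => (c s).toFinset

theorem mem_chainBlue {S : Finset V} {c : V → List V} {v : V} :
    v ∈ chainBlue S c ↔ ∃ s ∈ S, v ∈ c s := by
  simp [chainBlue]

theorem chainBlue_update_cons {S : Finset V} {c : V → List V} {s : V} (hs : s ∈ S) (w : V) :
    chainBlue S (Function.update c s (w :: c s)) = insert w (chainBlue S c) := by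
  ext v
  simp only [mem_chainBlue, Finset.mem_insert, Function.update_apply]
  constructor
  · rintro ⟨t, ht, hv⟩
    split_ifs at hv with hts
    · rcases List.mem_cons.1 hv with rfl | hv
      · exact .inl rfl
      · exact .inr ⟨s, hs, hts ▸ hv⟩
    · exact .inr ⟨t, ht, hv⟩
  · rintro (rfl | ⟨t, ht, hv⟩)
    · exact ⟨s, hs, by simp⟩
    · refine ⟨t, ht, ?_⟩
      split_ifs with hts
      · exact List.mem_cons_of_mem _ (hts ▸ hv)
      · exact hv

/-- `c s` is the forcing chain started at `s ∈ S`, listed from its newest vertex back to `s`;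
`chainBlue S c` is the current set of blue vertices. -/
structure IsForcingChains (G : SimpleGraph V) (S : Finset V) (c : V → List V) : Prop where
  mem_self : ∀ s ∈ S, s ∈ c s
  pairwiseDisjoint : (S : Set V).PairwiseDisjoint fun s => (c s).toFinset
  isListPath : ∀ s ∈ S, IsListPath G (c s)
  adj_mem_chainBlue : ∀ s ∈ S, ∀ v ∈ (c s).tail, ∀ x, G.Adj v x → x ∈ chainBlue S c

theorem isForcingChains_singleton (G : SimpleGraph V) (S : Finset V) :
    IsForcingChains G S fun s => [s] where
  mem_self _ _ := List.mem_singleton_self _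
  pairwiseDisjoint s _ t _ hst := by simpa using hst
  isListPath _ _ := isListPath_singleton _
  adj_mem_chainBlue _ _ _ hv := by simp at hv

namespace IsForcingChains
variable {S : Finset V} {c : V → List V}

theorem subset_chainBlue (hc : IsForcingChains G S c) : (S : Set V) ⊆ chainBlue S c :=
  fun s hs => mem_chainBlue.2 ⟨s, hs, hc.mem_self s hs⟩

theorem exists_eq_cons (hc : IsForcingChains G S c) {u w : V} (hu : u ∈ chainBlue S c)
    (hw : w ∉ chainBlue S c) (huw : G.Adj u w) : ∃ s ∈ S, ∃ rest, c s = u :: rest := by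
  obtain ⟨s, hs, hus⟩ := mem_chainBlue.1 hu
  refine ⟨s, hs, ?_⟩
  cases hcs : c s with
  | nil => simp [hcs] at hus
  | cons a rest =>
    rcases List.mem_cons.1 (hcs ▸ hus) with rfl | hrest
    · exact ⟨rest, rfl⟩
    · exact absurd (hc.adj_mem_chainBlue s hs u (by simp [hcs, hrest]) w huw) hw

theorem update_cons (hc : IsForcingChains G S c) {s u w : V} {rest : List V} (hs : s ∈ S)
    (hcs : c s = u :: rest) (hw : w ∉ chainBlue S c) (huw : G.Adj u w)
    (hforce : ∀ x, G.Adj u x → x ∉ chainBlue S c → x = w) :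
    IsForcingChains G S (Function.update c s (w :: c s)) := by
  have hw_chain : ∀ t ∈ S, w ∉ c t := fun t ht hwt => hw (mem_chainBlue.2 ⟨t, ht, hwt⟩)
  have hrest_blue : ∀ v ∈ rest, ∀ x, G.Adj v x → x ∈ chainBlue S c := by
    simpa [hcs] using hc.adj_mem_chainBlue s hs
  refine ⟨fun t ht => ?_, fun t ht t' ht' htt' => ?_, fun t ht => ?_, fun t ht v hv x hvx => ?_⟩
  · rw [Function.update_apply]
    split_ifs with hts
    · exact List.mem_cons_of_mem _ (hts ▸ hc.mem_self t ht)
    · exact hc.mem_self t ht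
  · simp only [Function.onFun, Function.update_apply]
    split_ifs with hts hts' hts'
    · exact absurd (hts.trans hts'.symm) htt'
    · rw [List.toFinset_cons, Finset.disjoint_insert_left]
      exact ⟨by simpa using hw_chain t' ht', hts ▸ hc.pairwiseDisjoint ht ht' htt'⟩
    · rw [List.toFinset_cons, Finset.disjoint_insert_right]
      exact ⟨by simpa using hw_chain t ht, hts' ▸ hc.pairwiseDisjoint ht ht' htt'⟩
    · exact hc.pairwiseDisjoint ht ht' htt'
  · rw [Function.update_apply]
    split_ifs with hts
    · subst hts
      rw [hcs]
      exact (hcs ▸ hc.isListPath t ht).cons (hcs ▸ hw_chain t ht) huw.symm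
        fun v hv hwv => hw (hrest_blue v hv w hwv.symm)
    · exact hc.isListPath t ht
  · rw [chainBlue_update_cons hs]
    rw [Function.update_apply] at hv
    split_ifs at hv with hts
    · rw [List.tail_cons, hcs] at hv
      rcases List.mem_cons.1 hv with rfl | hv
      · by_cases hx : x ∈ chainBlue S c
        · exact Finset.mem_insert_of_mem hx
        · exact hforce x hvx hx ▸ Finset.mem_insert_self _ _
      · exact Finset.mem_insert_of_mem (hrest_blue v hv x hvx)
    · exact Finset.mem_insert_of_mem (hc.adj_mem_chainBlue t ht v hv x hvx)

theorem exists_chainBlue_eq_univ [Fintype V] (hS : IsZeroForcingSet G S) {c : V → List V}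
    (hc : IsForcingChains G S c) : ∃ c', IsForcingChains G S c' ∧ chainBlue S c' = .univ := by
  by_cases huniv : chainBlue S c = .univ
  · exact ⟨c, hc, huniv⟩
  obtain ⟨u, hu, w, hw, huw, hforce⟩ :=
    hS.exists_force hc.subset_chainBlue (by simpa [← Finset.coe_univ] using huniv)
  obtain ⟨s, hs, rest, hcs⟩ := hc.exists_eq_cons hu hw huw
  exact (hc.update_cons hs hcs hw huw hforce).exists_chainBlue_eq_univ hS
termination_by (chainBlue S c)ᶜ.card
decreasing_by
  rw [chainBlue_update_cons hs]
  exact Finset.card_lt_card (Finset.compl_ssubset_compl.2 (Finset.ssubset_insert hw))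

theorem pathCoverNumber_le [Fintype V] (hc : IsForcingChains G S c)
    (huniv : chainBlue S c = .univ) : pathCoverNumber G ≤ S.card := by
  set parts := S.image fun s => (c s).toFinset
  have hdisj : (parts : Set (Finset V)).PairwiseDisjoint id := by
    simp only [parts, Finset.coe_image]
    rintro _ ⟨s, hs, rfl⟩ _ ⟨t, ht, rfl⟩ hst
    exact hc.pairwiseDisjoint hs ht fun h => hst (h ▸ rfl)
  have hsup : parts.sup id = .univ := by
    rw [← huniv, chainBlue, Finset.sup_image, Finset.sup_eq_biUnion]
    rfl
  let P := (Finpartition.ofPairwiseDisjoint parts hdisj).copy hsup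
  have hP : ∀ p ∈ P.parts, IsInducedPathSet G p := by
    intro p hp
    obtain ⟨s, hs, rfl⟩ := Finset.mem_image.1 (Finset.mem_of_mem_erase hp)
    exact ⟨c s, hc.isListPath s hs, by ext; simp⟩
  calc pathCoverNumber G ≤ P.parts.card := Nat.sInf_le ⟨P, rfl, hP⟩
    _ ≤ parts.card := Finset.card_erase_le
    _ ≤ S.card := Finset.card_image_le

end IsForcingChains

end ForcingChains

/-- For any simple graph `G`, the path cover number `P(G)` is at most
the zero forcing number `Z(G)`. -/
theorem pathCoverNumber_le_zeroForcingNumber {V : Type*} [Fintype V] [DecidableEq V]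
    (G : SimpleGraph V) : pathCoverNumber G ≤ zeroForcingNumber G := by
  obtain ⟨S, hcard, hS⟩ : ∃ S : Finset V, S.card = zeroForcingNumber G ∧ IsZeroForcingSet G S :=
    Nat.sInf_mem (s := {n | ∃ S : Finset V, S.card = n ∧ IsZeroForcingSet G S})
      ⟨_, .univ, rfl, by simpa using isZeroForcingSet_univ⟩
  obtain ⟨c, hc, huniv⟩ := (isForcingChains_singleton G S).exists_chainBlue_eq_univ hS
  exact hcard ▸ hc.pathCoverNumber_le huniv
end

section
/- For the sun graph S_k on 2k vertices, the path cover number P(S_k) equals k. -/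
open SimpleGraph

/-- The sun graph `S_k` on `2k` vertices: a cycle `v_0, …, v_{k-1}` (the left
summands) together with vertices `u_0, …, u_{k-1}` (the right summands) where `u_i`
is adjacent to `v_i` and `v_{i+1}` (indices mod `k`). -/
def sunGraph (k : ℕ) : SimpleGraph (Fin k ⊕ Fin k) :=
  SimpleGraph.fromRel (fun x y =>
    match x, y with
    | Sum.inl i, Sum.inl j => (j : ℕ) = ((i : ℕ) + 1) % k
    | Sum.inr i, Sum.inl j => (j : ℕ) = (i : ℕ) ∨ (j : ℕ) = ((i : ℕ) + 1) % k
    | _, _ => False)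

/-!
An induced path on `n` vertices has `n - 1` edges. Every edge of `S_k` lies in one of the `k`
triangles `{v_t, v_{t+1}, u_t}`, and no two edges of an induced path lie in a common triangle
(an induced path contains no triangle), so a part with `n` vertices meets at least `n - 1`
triangles in two vertices. A triangle has three vertices, so it meets at most one part of a
partition in two vertices. Summing over the parts of a partition into `m` induced paths gives
`2k - m ≤ k`; the `k` edges `u_t v_t` form a partition into `k` induced paths.
-/

open Finset

section PathCover

variable {V : Type*} {G : SimpleGraph V}

lemma isInducedPathSet_singleton (v : V) : IsInducedPathSet G {v} :=
  ⟨[v], ⟨List.nodup_singleton v, fun i j => by fin_cases i; fin_cases j; simp⟩, by simp⟩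

lemma SimpleGraph.Adj.isInducedPathSet {x y : V} (h : G.Adj x y) : IsInducedPathSet G {x, y} := by
  refine ⟨[x, y], ⟨by simp [h.ne], fun i j => ?_⟩, by ext; simp⟩
  fin_cases i <;> fin_cases j <;> simp [h, h.symm]

lemma IsListPath.val_eq_succ_of_isClique {l : List V} (hl : IsListPath G l) {S : Set V}
    (hS : G.IsClique S) {i j : Fin l.length} (hi : l.get i ∈ S) (hj : l.get j ∈ S) (hij : i < j) :
    (j : ℕ) = i + 1 := by
  have := (hl.2 i j).mp (hS hi hj (hl.1.get_inj_iff.not.mpr hij.ne))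
  omega

variable {ι : Type*} [DecidableEq V]

lemma IsListPath.length_le_one_add_card_filter {l : List V} (hl : IsListPath G l) [Fintype ι]
    (T : ι → Finset V) (hclique : ∀ i, G.IsClique (T i : Set V))
    (hcover : ∀ ⦃x y⦄, G.Adj x y → ∃ i, x ∈ T i ∧ y ∈ T i) :
    l.length ≤ 1 + #{i | 1 < #(l.toFinset ∩ T i)} := by
  set n := l.length
  have hedge : ∀ m : Fin (n - 1), ∃ i, l.get ⟨m, by omega⟩ ∈ T i ∧ l.get ⟨m + 1, by omega⟩ ∈ T i :=
    fun m => hcover ((hl.2 _ _).mpr (Or.inl rfl))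
  choose f hf using hedge
  have hf_inj : ∀ a b, f a = f b → a ≤ b → a = b := fun a b hab hle => by
    have := hl.val_eq_succ_of_isClique (hclique (f a)) (hf a).1 (hab ▸ (hf b).2)
      (Fin.mk_lt_mk.mpr (by omega))
    exact Fin.ext (by simpa using this.symm)
  have hinj : Function.Injective f := fun a b hab =>
    (le_total a b).elim (hf_inj a b hab) fun h => (hf_inj b a hab.symm h).symm
  have hmaps : ∀ m, f m ∈ ({i | 1 < #(l.toFinset ∩ T i)} : Finset ι) := fun m => by
    have hne : l.get ⟨m, by omega⟩ ≠ l.get ⟨m + 1, by omega⟩ :=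
      hl.1.get_inj_iff.not.mpr (Fin.ne_of_val_ne (Nat.ne_add_one m))
    rw [mem_filter, one_lt_card]
    exact ⟨mem_univ _, _, mem_inter.mpr ⟨by simp, (hf m).1⟩, _, mem_inter.mpr ⟨by simp, (hf m).2⟩,
      hne⟩
  have hcard := card_le_card_of_injOn f (s := univ) (fun m _ => hmaps m) hinj.injOn
  simp only [card_univ, Fintype.card_fin] at hcard
  omega

lemma IsInducedPathSet.card_le_one_add_card_filter {Q : Finset V} (hQ : IsInducedPathSet G Q)
    [Fintype ι] (T : ι → Finset V) (hclique : ∀ i, G.IsClique (T i : Set V))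
    (hcover : ∀ ⦃x y⦄, G.Adj x y → ∃ i, x ∈ T i ∧ y ∈ T i) :
    #Q ≤ 1 + #{i | 1 < #(Q ∩ T i)} := by
  obtain ⟨l, hl, hlQ⟩ := hQ
  obtain rfl : Q = l.toFinset := by ext v; simpa using (Set.ext_iff.mp hlQ v).symm
  rw [List.toFinset_card_of_nodup hl.1]
  exact hl.length_le_one_add_card_filter T hclique hcover

lemma Finpartition.card_filter_one_lt_card_inter_le_one {s : Finset V}
    (P : Finpartition s) {T : Finset V} (hT : #T ≤ 3) :
    #{Q ∈ P.parts | 1 < #(Q ∩ T)} ≤ 1 := by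
  refine card_le_one.mpr fun Q hQ Q' hQ' => ?_
  rw [mem_filter] at hQ hQ'
  by_contra hne
  have hdisj : Disjoint (Q ∩ T) (Q' ∩ T) :=
    (P.disjoint hQ.1 hQ'.1 hne).mono inter_subset_left inter_subset_left
  have : #(Q ∩ T ∪ Q' ∩ T) ≤ #T := card_le_card (union_subset inter_subset_right inter_subset_right)
  rw [card_union_of_disjoint hdisj] at this
  omega

theorem card_le_card_parts_add_card_of_isClique_cover [Fintype V] [Fintype ι]
    (T : ι → Finset V) (hT : ∀ i, #(T i) ≤ 3) (hclique : ∀ i, G.IsClique (T i : Set V))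
    (hcover : ∀ ⦃x y⦄, G.Adj x y → ∃ i, x ∈ T i ∧ y ∈ T i)
    (P : Finpartition (univ : Finset V)) (hP : ∀ Q ∈ P.parts, IsInducedPathSet G Q) :
    Fintype.card V ≤ #P.parts + Fintype.card ι := by
  let r : Finset V → ι → Prop := fun Q i => 1 < #(Q ∩ T i)
  calc Fintype.card V = ∑ Q ∈ P.parts, #Q := by rw [P.sum_card_parts, card_univ]
    _ ≤ ∑ Q ∈ P.parts, (1 + #(univ.bipartiteAbove r Q)) := sum_le_sum fun Q hQ =>
        (hP Q hQ).card_le_one_add_card_filter T hclique hcover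
    _ = #P.parts + ∑ i, #(P.parts.bipartiteBelow r i) := by
        rw [sum_add_distrib, sum_card_bipartiteAbove_eq_sum_card_bipartiteBelow, card_eq_sum_ones]
    _ ≤ #P.parts + ∑ _i : ι, 1 := by
        gcongr with i
        exact P.card_filter_one_lt_card_inter_le_one (hT i)
    _ = #P.parts + Fintype.card ι := by rw [sum_const, card_univ, smul_eq_mul, mul_one]

end PathCover

section PathCoverNumber

variable {V : Type*} [Fintype V] [DecidableEq V] {G : SimpleGraph V}

lemma pathCoverNumber_le {P : Finpartition (univ : Finset V)}
    (hP : ∀ Q ∈ P.parts, IsInducedPathSet G Q) : pathCoverNumber G ≤ #P.parts :=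
  Nat.sInf_le ⟨P, rfl, hP⟩

lemma exists_finpartition_card_eq_pathCoverNumber (G : SimpleGraph V) :
    ∃ P : Finpartition (univ : Finset V),
      #P.parts = pathCoverNumber G ∧ ∀ Q ∈ P.parts, IsInducedPathSet G Q := by
  refine Nat.sInf_mem (s := {n | ∃ P : Finpartition (univ : Finset V),
    #P.parts = n ∧ ∀ Q ∈ P.parts, IsInducedPathSet G Q}) ⟨_, ⊥, rfl, fun Q hQ => ?_⟩
  rw [Finpartition.parts_bot, mem_map] at hQ
  obtain ⟨v, -, rfl⟩ := hQ
  simpa using isInducedPathSet_singleton v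

theorem card_le_pathCoverNumber_add_card_of_isClique_cover {ι : Type*} [Fintype ι]
    (T : ι → Finset V) (hT : ∀ i, #(T i) ≤ 3) (hclique : ∀ i, G.IsClique (T i : Set V))
    (hcover : ∀ ⦃x y⦄, G.Adj x y → ∃ i, x ∈ T i ∧ y ∈ T i) :
    Fintype.card V ≤ pathCoverNumber G + Fintype.card ι := by
  obtain ⟨P, hcard, hP⟩ := exists_finpartition_card_eq_pathCoverNumber G
  exact hcard ▸ card_le_card_parts_add_card_of_isClique_cover T hT hclique hcover P hP

end PathCoverNumber

section SunGraph

variable {k : ℕ}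

lemma sunGraph_adj_inr_inl (i : Fin k) : (sunGraph k).Adj (.inr i) (.inl i) := by
  simp [sunGraph]

def sunTriangle (t : Fin k) : Finset (Fin k ⊕ Fin k) :=
  {.inl t, .inl ⟨(t + 1) % k, Nat.mod_lt _ t.pos⟩, .inr t}

lemma card_sunTriangle_le (t : Fin k) : #(sunTriangle t) ≤ 3 := card_le_three

lemma isClique_sunTriangle (t : Fin k) : (sunGraph k).IsClique (sunTriangle t : Set _) := by
  intro x hx y hy hne
  simp only [sunTriangle, coe_insert, coe_singleton, Set.mem_insert_iff,
    Set.mem_singleton_iff] at hx hy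
  rcases hx with rfl | rfl | rfl <;> rcases hy with rfl | rfl | rfl <;>
    simp_all [sunGraph]

lemma SimpleGraph.Adj.exists_sunTriangle {x y : Fin k ⊕ Fin k} (h : (sunGraph k).Adj x y) :
    ∃ t, x ∈ sunTriangle t ∧ y ∈ sunTriangle t := by
  rcases x with i | i <;> rcases y with j | j <;>
    simp only [sunGraph, fromRel_adj, ne_eq, Sum.inl.injEq, Sum.inr.injEq, reduceCtorEq,
      not_false_eq_true, false_or, or_false, true_and, or_self, and_false] at h
  · rcases h with ⟨-, h | h⟩
    · exact ⟨i, by simp [sunTriangle, Fin.ext_iff, h]⟩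
    · exact ⟨j, by simp [sunTriangle, Fin.ext_iff, h]⟩
  · exact ⟨j, by simpa [sunTriangle, Fin.ext_iff] using h⟩
  · exact ⟨i, by simpa [sunTriangle, Fin.ext_iff, eq_comm] using h⟩

def sunPairPartition (k : ℕ) : Finpartition (univ : Finset (Fin k ⊕ Fin k)) :=
  .ofExistsUnique (univ.image fun i => {.inl i, .inr i}) (fun _ _ => subset_univ _)
    (by rintro (i | i) - <;> refine ⟨{.inl i, .inr i}, by simp, ?_⟩ <;> aesop)
    (by simp)

lemma card_sunPairPartition_parts : #(sunPairPartition k).parts = k := by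
  rw [sunPairPartition, Finpartition.ofExistsUnique_parts, card_image_of_injective, card_univ,
    Fintype.card_fin]
  intro i j h
  simpa using congrArg (Sum.inl i ∈ ·) h

lemma isInducedPathSet_of_mem_sunPairPartition :
    ∀ Q ∈ (sunPairPartition k).parts, IsInducedPathSet (sunGraph k) Q := by
  simp only [sunPairPartition, Finpartition.ofExistsUnique_parts, mem_image, mem_univ, true_and,
    forall_exists_index, forall_apply_eq_imp_iff, coe_insert, coe_singleton]
  exact fun i => (sunGraph_adj_inr_inl i).symm.isInducedPathSet

end SunGraph

theorem pathCoverNumber_sunGraph_general (k : ℕ) :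
    pathCoverNumber (sunGraph k) = k := by
  refine le_antisymm ?_ ?_
  · calc pathCoverNumber (sunGraph k) ≤ #(sunPairPartition k).parts :=
          pathCoverNumber_le isInducedPathSet_of_mem_sunPairPartition
      _ = k := card_sunPairPartition_parts
  · have hcount := card_le_pathCoverNumber_add_card_of_isClique_cover (G := sunGraph k)
      sunTriangle card_sunTriangle_le isClique_sunTriangle fun _ _ h => h.exists_sunTriangle
    simp only [Fintype.card_sum, Fintype.card_fin] at hcount
    omega

/-- For the sun graph `S_k` on `2k` vertices, the path cover number
`P(S_k)` equals `k`. -/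
theorem pathCoverNumber_sunGraph (k : ℕ) (hk : 3 ≤ k) :
    pathCoverNumber (sunGraph k) = k :=
  pathCoverNumber_sunGraph_general k
end
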